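/- For n ≥ 2, any independent generating subset of the multiplicative semigroup A^+(B_n) contains exactly one singleton-support element and exactly one full-support (nonzero constant) element. -/

import Mathlib

def Bn (n : ℕ) : Type := Option (Fin n × Fin n)

def Bn.mul {n : ℕ} : Bn n → Bn n → Bn n
  | some (i, j), some (k, l) => if j = k then some (i, l) else none
  | _, _ => none

instance (n : ℕ) : Mul (Bn n) := ⟨Bn.mul⟩

instance (n : ℕ) : Semigroup (Bn n) where
  mul_assoc a b c := by
    show Bn.mul (Bn.mul a b) c = Bn.mul a (Bn.mul b c)
    have h1 : ∀ i j k l : Fin n, Bn.mul (some (i, j)) (some (k, l)) =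
        if j = k then some (i, l) else none := fun _ _ _ _ => rfl
    have h3 : ∀ x : Bn n, Bn.mul x none = none := fun x => by
      rcases x with _ | ⟨_, _⟩ <;> rfl
    rcases a with _ | ⟨i, j⟩ <;> rcases b with _ | ⟨k, l⟩ <;> rcases c with _ | ⟨p, q⟩ <;>
      try rfl
    · exact (h3 _).trans (h3 _).symm ▸ rfl
    · rw [h1, h1]
      by_cases hjk : j = k <;> by_cases hlp : l = p
      · rw [if_pos hjk, if_pos hlp, h1, h1, hjk, if_pos hlp, if_pos rfl]
      · rw [if_pos hjk, if_neg hlp, h1, if_neg hlp]; rfl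
      · rw [if_neg hjk, if_pos hlp, h1, if_neg hjk]; rfl
      · rw [if_neg hjk, if_neg hlp]; rfl

/-- Maps on `Bn n`, composed left-to-right: `x (f * g) = (x f) g`. -/
def MapBn (n : ℕ) : Type := Bn n → Bn n

instance (n : ℕ) : Monoid (MapBn n) where
  mul f g := fun x => g (f x)
  one := fun x => x
  mul_assoc _ _ _ := rfl
  one_mul _ := rfl
  mul_one _ := rfl

/-- The constant map `ξ_c`. -/
def constMap (n : ℕ) (c : Bn n) : MapBn n := fun _ => c

/-- The `n`-support map `(p, q; σ)`, sending `(i, p) ↦ (iσ, q)` and all else to `θ`. -/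
def nSuppMap (n : ℕ) (p q : Fin n) (σ : Equiv.Perm (Fin n)) : MapBn n :=
  fun x =>
    match x with
    | some (i, j) => if j = p then some (σ i, q) else none
    | none => none

instance (n : ℕ) : DecidableEq (Bn n) :=
  inferInstanceAs (DecidableEq (Option (Fin n × Fin n)))

/-- The singleton-support map `((k,l) → (p,q))`. -/
def sglMap (n : ℕ) (k l p q : Fin n) : MapBn n :=
  fun x => @ite _ (x = some (k, l)) (instDecidableEqBn n x (some (k, l))) (some (p, q)) none

/-- The multiplicative semigroup reduct `A⁺(Bₙ)`, as a set of maps on `Bn n`. -/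
def APlus (n : ℕ) : Set (MapBn n) :=
  {f | (∃ c, f = constMap n c) ∨ (∃ p q σ, f = nSuppMap n p q σ) ∨
       (∃ k l p q, f = sglMap n k l p q)}

/-- Independence of a subset of a semigroup. -/
def IndependentIn {S : Type*} [Semigroup S] (U : Set S) : Prop :=
  ∀ a ∈ U, a ∉ Subsemigroup.closure (U \ {a})


/-!
A product in `A⁺(Bₙ)` is an `n`-support map only if both factors are: the `n`-support maps are
exactly the elements with two distinct nonzero values, and they fix `θ`. So the `n`-support
elements of a generating set `U` already generate every `n`-support map. Any singleton-support map
is a two-sided `n`-support multiple of any other, and any nonzero constant a right `n`-support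
multiple of any other; by independence `U` holds at most one of each. It holds at least one of
each, since the constants together with the `n`-support maps form a subsemigroup, and so do the
maps fixing `θ`.
-/

theorem Subsemigroup.mem_closure_sep {S : Type*} [Mul S] {U : Set S} {P : S → Prop}
    (hP : ∀ x ∈ closure U, ∀ y ∈ closure U, P (x * y) → P x ∧ P y)
    {x : S} (hx : x ∈ closure U) (hPx : P x) : x ∈ closure {u ∈ U | P u} := by
  induction hx using closure_induction with
  | mem u hu => exact subset_closure ⟨hu, hPx⟩
  | mul y z hy hz ihy ihz =>
    obtain ⟨hPy, hPz⟩ := hP y hy z hz hPx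
    exact mul_mem (ihy hPy) (ihz hPz)

theorem IndependentIn.eq_of_mem_closure_insert {S : Type*} [Semigroup S] {U : Set S}
    (hind : IndependentIn U) {a b : S} (ha : a ∈ U) (hb : b ∈ U) {T : Set S}
    (hT : T ⊆ Subsemigroup.closure (U \ {a})) (h : a ∈ Subsemigroup.closure (insert b T)) :
    a = b := by
  by_contra hab
  refine hind a ha (Subsemigroup.closure_le.mpr ?_ h)
  rintro x (rfl | hx)
  · exact Subsemigroup.subset_closure ⟨hb, Ne.symm hab⟩
  · exact hT hx

namespace MapBn

variable {n : ℕ}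

theorem ext {f g : MapBn n} (h : ∀ x, f x = g x) : f = g := funext h

theorem mul_apply (f g : MapBn n) (x : Bn n) : (f * g) x = g (f x) := rfl

theorem constMap_mul (c : Bn n) (f : MapBn n) : constMap n c * f = constMap n (f c) := rfl

theorem mul_constMap (f : MapBn n) (c : Bn n) : f * constMap n c = constMap n c := rfl

theorem sglMap_apply_self (k l p q : Fin n) : sglMap n k l p q (some (k, l)) = some (p, q) :=
  if_pos rfl

theorem sglMap_apply_of_ne {k l p q : Fin n} {x : Bn n} (hx : x ≠ some (k, l)) :
    sglMap n k l p q x = none :=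
  if_neg hx

theorem nSuppMap_apply (p q i j : Fin n) (σ : Equiv.Perm (Fin n)) :
    nSuppMap n p q σ (some (i, j)) = if j = p then some (σ i, q) else none := rfl

theorem nSuppMap_mul_nSuppMap (p q p' q' : Fin n) (σ τ : Equiv.Perm (Fin n)) :
    nSuppMap n p q σ * nSuppMap n p' q' τ =
      if q = p' then nSuppMap n p q' (σ.trans τ) else constMap n none := by
  refine ext fun x => ?_
  rw [mul_apply]
  rcases x with _ | ⟨i, j⟩
  · split_ifs <;> rfl
  · simp only [nSuppMap_apply]
    split_ifs <;> (try simp_all [nSuppMap_apply]) <;> rfl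

theorem nSuppMap_mul_sglMap_mul_nSuppMap (k l p q l' q' : Fin n)
    (σ τ : Equiv.Perm (Fin n)) :
    nSuppMap n l l' σ * sglMap n k l' p q * nSuppMap n q q' τ =
      sglMap n (σ.symm k) l (τ p) q' := by
  refine ext fun x => ?_
  rw [mul_apply, mul_apply]
  by_cases hx : x = some (σ.symm k, l)
  · subst hx
    rw [nSuppMap_apply, if_pos rfl, Equiv.apply_symm_apply, sglMap_apply_self, nSuppMap_apply,
      if_pos rfl, sglMap_apply_self]
  · have hσx : nSuppMap n l l' σ x ≠ some (k, l') := by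
      rcases x with _ | ⟨i, j⟩
      · nofun
      · rw [nSuppMap_apply]
        split_ifs with hj
        · rintro ⟨⟩
          exact hx (by rw [hj, Equiv.symm_apply_apply])
        · nofun
    rw [sglMap_apply_of_ne hσx, sglMap_apply_of_ne hx]
    rfl

def IsNSupp (f : MapBn n) : Prop := ∃ p q σ, f = nSuppMap n p q σ

def HasTwoNonzeroValues (f : MapBn n) : Prop :=
  ∃ x y, f x ≠ none ∧ f y ≠ none ∧ f x ≠ f y

theorem IsNSupp.apply_none {f : MapBn n} (hf : IsNSupp f) : f none = none := by
  obtain ⟨p, q, σ, rfl⟩ := hf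
  rfl

theorem IsNSupp.hasTwoNonzeroValues (hn : 2 ≤ n) {f : MapBn n} (hf : IsNSupp f) :
    HasTwoNonzeroValues f := by
  obtain ⟨p, q, σ, rfl⟩ := hf
  have : Nontrivial (Fin n) := Fin.nontrivial_iff_two_le.mpr hn
  obtain ⟨i, j, hij⟩ := exists_pair_ne (Fin n)
  refine ⟨some (i, p), some (j, p), ?_, ?_, ?_⟩ <;>
    simp only [nSuppMap_apply, ↓reduceIte]
  · nofun
  · nofun
  · exact (Option.some_injective _).ne ((Prod.mk_left_injective q).ne (σ.injective.ne hij))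

theorem not_hasTwoNonzeroValues_constMap (c : Bn n) : ¬HasTwoNonzeroValues (constMap n c) :=
  fun ⟨_, _, _, _, h⟩ => h rfl

theorem not_hasTwoNonzeroValues_sglMap (k l p q : Fin n) :
    ¬HasTwoNonzeroValues (sglMap n k l p q) := by
  rintro ⟨x, y, hx, hy, hxy⟩
  have hsupp : ∀ z, sglMap n k l p q z ≠ none → z = some (k, l) :=
    fun z hz => by_contra fun h => hz (sglMap_apply_of_ne h)
  exact hxy (by rw [hsupp x hx, hsupp y hy])

theorem isNSupp_of_hasTwoNonzeroValues {f : MapBn n} (hf : f ∈ APlus n)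
    (h : HasTwoNonzeroValues f) : IsNSupp f := by
  rcases hf with ⟨c, rfl⟩ | hf | ⟨k, l, p, q, rfl⟩
  · exact absurd h (not_hasTwoNonzeroValues_constMap c)
  · exact hf
  · exact absurd h (not_hasTwoNonzeroValues_sglMap k l p q)

theorem not_isNSupp_constMap (hn : 2 ≤ n) (c : Bn n) : ¬IsNSupp (constMap n c) :=
  fun h => not_hasTwoNonzeroValues_constMap c (h.hasTwoNonzeroValues hn)

theorem not_isNSupp_sglMap (hn : 2 ≤ n) (k l p q : Fin n) : ¬IsNSupp (sglMap n k l p q) :=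
  fun h => not_hasTwoNonzeroValues_sglMap k l p q (h.hasTwoNonzeroValues hn)

theorem sglMap_ne_constMap (k l p q : Fin n) (c : Bn n) : sglMap n k l p q ≠ constMap n c := by
  intro h
  have hθ : none = c := congrFun h none
  have hkl : some (p, q) = c := (sglMap_apply_self k l p q).symm.trans (congrFun h _)
  exact Option.some_ne_none (p, q) (hkl.trans hθ.symm)

theorem HasTwoNonzeroValues.of_mul_right {f g : MapBn n} (h : HasTwoNonzeroValues (f * g)) :
    HasTwoNonzeroValues g :=
  let ⟨x, y, hx, hy, hxy⟩ := h
  ⟨f x, f y, hx, hy, hxy⟩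

theorem HasTwoNonzeroValues.of_mul_left {f g : MapBn n} (hg : g none = none)
    (h : HasTwoNonzeroValues (f * g)) : HasTwoNonzeroValues f := by
  obtain ⟨x, y, hx, hy, hxy⟩ := h
  refine ⟨x, y, fun hfx => hx ?_, fun hfy => hy ?_, fun hfxy => hxy ?_⟩
  · rw [mul_apply, hfx, hg]
  · rw [mul_apply, hfy, hg]
  · rw [mul_apply, mul_apply, hfxy]

theorem isNSupp_of_isNSupp_mul (hn : 2 ≤ n) {f g : MapBn n} (hf : f ∈ APlus n)
    (hg : g ∈ APlus n) (h : IsNSupp (f * g)) : IsNSupp f ∧ IsNSupp g := by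
  have hfg := h.hasTwoNonzeroValues hn
  have hg' := isNSupp_of_hasTwoNonzeroValues hg hfg.of_mul_right
  exact ⟨isNSupp_of_hasTwoNonzeroValues hf (hfg.of_mul_left hg'.apply_none), hg'⟩

theorem sglMap_mem_closure_insert_sglMap (k l p q k' l' p' q' : Fin n) :
    sglMap n k l p q ∈
      Subsemigroup.closure (insert (sglMap n k' l' p' q') {f | IsNSupp f}) := by
  have hconj := nSuppMap_mul_sglMap_mul_nSuppMap k' l p' q' l' q (Equiv.swap k k')
    (Equiv.swap p' p)
  rw [Equiv.symm_swap, Equiv.swap_apply_right, Equiv.swap_apply_left] at hconj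
  rw [← hconj]
  refine mul_mem (mul_mem ?_ ?_) ?_
  all_goals apply Subsemigroup.subset_closure
  exacts [Or.inr ⟨_, _, _, rfl⟩, Or.inl rfl, Or.inr ⟨_, _, _, rfl⟩]

theorem exists_isNSupp_apply_eq {c d : Bn n} (hc : c ≠ none) (hd : d ≠ none) :
    ∃ g, IsNSupp g ∧ g d = c := by
  obtain ⟨⟨i, j⟩, rfl⟩ := Option.ne_none_iff_exists'.mp hc
  obtain ⟨⟨i', j'⟩, rfl⟩ := Option.ne_none_iff_exists'.mp hd
  refine ⟨nSuppMap n j' j (Equiv.swap i' i), ⟨_, _, _, rfl⟩, ?_⟩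
  rw [nSuppMap_apply, if_pos rfl, Equiv.swap_apply_left]

theorem constMap_mem_closure_insert_constMap {c d : Bn n} (hc : c ≠ none) (hd : d ≠ none) :
    constMap n c ∈ Subsemigroup.closure (insert (constMap n d) {f | IsNSupp f}) := by
  obtain ⟨g, hg, rfl⟩ := exists_isNSupp_apply_eq hc hd
  rw [← constMap_mul]
  exact mul_mem (Subsemigroup.subset_closure (Or.inl rfl))
    (Subsemigroup.subset_closure (Or.inr hg))

def constOrNSupp (n : ℕ) : Subsemigroup (MapBn n) where
  carrier := {f | (∃ c, f = constMap n c) ∨ IsNSupp f}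
  mul_mem' := by
    rintro f g (⟨c, rfl⟩ | ⟨p, q, σ, rfl⟩) hg
    · exact Or.inl ⟨_, constMap_mul c g⟩
    · rcases hg with ⟨c, rfl⟩ | ⟨p', q', τ, rfl⟩
      · exact Or.inl ⟨c, mul_constMap _ c⟩
      · rw [nSuppMap_mul_nSuppMap]
        split_ifs
        · exact Or.inr ⟨_, _, _, rfl⟩
        · exact Or.inl ⟨none, rfl⟩

def fixingZero (n : ℕ) : Subsemigroup (MapBn n) where
  carrier := {f | f none = none}
  mul_mem' {f g} hf hg := by
    change g (f none) = none
    rw [hf, hg]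

variable {U : Set (MapBn n)}

theorem setOf_isNSupp_subset_closure_diff (hn : 2 ≤ n)
    (hgen : (Subsemigroup.closure U : Set (MapBn n)) = APlus n) {a : MapBn n}
    (ha : ¬IsNSupp a) : {f | IsNSupp f} ⊆ (Subsemigroup.closure (U \ {a}) : Set (MapBn n)) := by
  intro f hf
  have hf' : f ∈ Subsemigroup.closure {u ∈ U | IsNSupp u} := by
    refine Subsemigroup.mem_closure_sep (fun x hx y hy => ?_) ?_ hf
    · exact isNSupp_of_isNSupp_mul hn (hgen.subset hx) (hgen.subset hy)
    · exact hgen.superset (Or.inr (Or.inl hf))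
  refine Subsemigroup.closure_mono (t := U \ {a}) (fun u hu => ⟨hu.1, ?_⟩) hf'
  rintro rfl
  exact ha hu.2

theorem exists_sglMap_mem (hn : 2 ≤ n)
    (hgen : (Subsemigroup.closure U : Set (MapBn n)) = APlus n) :
    ∃ a ∈ U, ∃ k l p q, a = sglMap n k l p q := by
  by_contra! hno
  have hle : Subsemigroup.closure U ≤ constOrNSupp n := by
    refine Subsemigroup.closure_le.mpr fun u hu => ?_
    rcases hgen.subset (Subsemigroup.subset_closure hu) with h | h | ⟨k, l, p, q, rfl⟩
    · exact Or.inl h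
    · exact Or.inr h
    · exact absurd rfl (hno _ hu k l p q)
  have e : Fin n := ⟨0, by omega⟩
  have hee : sglMap n e e e e ∈ constOrNSupp n :=
    hle (hgen.superset (Or.inr (Or.inr ⟨_, _, _, _, rfl⟩)))
  rcases hee with ⟨c, hc⟩ | h
  · exact sglMap_ne_constMap e e e e c hc
  · exact not_isNSupp_sglMap hn e e e e h

theorem exists_constMap_mem (hn : 0 < n)
    (hgen : (Subsemigroup.closure U : Set (MapBn n)) = APlus n) :
    ∃ a ∈ U, ∃ c : Bn n, c ≠ none ∧ a = constMap n c := by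
  by_contra! hno
  have hle : Subsemigroup.closure U ≤ fixingZero n := by
    refine Subsemigroup.closure_le.mpr fun u hu => ?_
    rcases hgen.subset (Subsemigroup.subset_closure hu) with
      ⟨c, rfl⟩ | h | ⟨k, l, p, q, rfl⟩
    · exact not_not.mp fun hc => hno _ hu c hc rfl
    · exact IsNSupp.apply_none h
    · rfl
  have e : Fin n := ⟨0, hn⟩
  have hee : constMap n (some (e, e)) ∈ fixingZero n := hle (hgen.superset (Or.inl ⟨_, rfl⟩))
  exact Option.some_ne_none (e, e) hee

end MapBn

open MapBn in
theorem ind_gen_unique_sgl_const_general (n : ℕ) (hn : 2 ≤ n) (U : Set (MapBn n))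
    (hgen : (Subsemigroup.closure U : Set (MapBn n)) = APlus n)
    (hind : IndependentIn U) :
    (∃! f, f ∈ U ∧ ∃ k l p q, f = sglMap n k l p q) ∧
    (∃! f, f ∈ U ∧ ∃ c : Bn n, c ≠ none ∧ f = constMap n c) := by
  obtain ⟨_, haU, k, l, p, q, rfl⟩ := exists_sglMap_mem hn hgen
  obtain ⟨_, hbU, c, hc, rfl⟩ := exists_constMap_mem (by omega) hgen
  refine ⟨⟨_, ⟨haU, k, l, p, q, rfl⟩, ?_⟩, ⟨_, ⟨hbU, c, hc, rfl⟩, ?_⟩⟩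
  · rintro _ ⟨hfU, k', l', p', q', rfl⟩
    exact hind.eq_of_mem_closure_insert hfU haU
      (setOf_isNSupp_subset_closure_diff hn hgen (not_isNSupp_sglMap hn k' l' p' q'))
      (sglMap_mem_closure_insert_sglMap k' l' p' q' k l p q)
  · rintro _ ⟨hfU, d, hd, rfl⟩
    exact hind.eq_of_mem_closure_insert hfU hbU
      (setOf_isNSupp_subset_closure_diff hn hgen (not_isNSupp_constMap hn d))
      (constMap_mem_closure_insert_constMap hd hc)

theorem ind_gen_unique_sgl_const (n : ℕ) (hn : 2 ≤ n) (U : Set (MapBn n))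
    (hU : U ⊆ APlus n) (hgen : (Subsemigroup.closure U : Set (MapBn n)) = APlus n)
    (hind : IndependentIn U) :
    (∃! f, f ∈ U ∧ ∃ k l p q, f = sglMap n k l p q) ∧
    (∃! f, f ∈ U ∧ ∃ c : Bn n, c ≠ none ∧ f = constMap n c) :=
  ind_gen_unique_sgl_const_general n hn U hgen hind
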